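/- arXiv:0908.0181 — 2 statements merged into one kernel-verified Lean document; each statement's English description precedes it below -/
import Mathlib

section
/- Let λ₁,...,λₙ be positive integers with sum S, let λ̄ = S/n be a non-integer, λ_* = ⌊λ̄⌋, λ* = ⌈λ̄⌉, and let δ be the positive integer with S = (n-δ)λ* + δλ_*. Then for every m, eₘ(λ₁,...,λₙ) ≤ eₘ(λ*,...,λ*,λ_*,...,λ_*), where on the right side λ* appears n-δ times and λ_* appears δ times. -/
open Finset

/-!
Moving one unit from an entry `a` to an entry `b` with `b + 1 < a` keeps the sum of the entries
and raises the product `a * b`. Since `eₘ(a, b, t) = eₘ(t) + (a + b) eₘ₋₁(t) + a b eₘ₋₂(t)` with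
nonnegative coefficients, no `eₘ` decreases, while the sum of squares strictly drops. The moves
therefore end at a multiset whose entries differ by at most one, and such a multiset is
determined by its size and its sum: it is the multiset on the right-hand side.
-/

def esymmFun (n : ℕ) (lam : Fin n → ℕ) (m : ℕ) : ℕ :=
  ∑ t ∈ Finset.univ.powersetCard m, ∏ i ∈ t, lam i

def balancedMultiset (n S : ℕ) : Multiset ℕ :=
  Multiset.replicate (S % n) (S / n + 1) + Multiset.replicate (n - S % n) (S / n)

theorem balancedMultiset_replicate_add_replicate (a c d : ℕ) (hd : 0 < d) :
    balancedMultiset (c + d) (c * (a + 1) + d * a) =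
      Multiset.replicate c (a + 1) + Multiset.replicate d a := by
  have hS : c * (a + 1) + d * a = c + a * (c + d) := by ring
  have hdiv : (c + a * (c + d)) / (c + d) = a := by
    rw [Nat.add_mul_div_right _ _ (by omega), Nat.div_eq_of_lt (by omega), zero_add]
  have hmod : (c + a * (c + d)) % (c + d) = c := by
    rw [Nat.add_mul_mod_self_right, Nat.mod_eq_of_lt (by omega)]
  rw [balancedMultiset, hS, hdiv, hmod, Nat.add_sub_cancel_left]

namespace Multiset

theorem esymm_zero {R : Type*} [CommSemiring R] (s : Multiset R) : s.esymm 0 = 1 := by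
  simp [esymm, powersetCard_zero_left]

theorem esymm_cons_succ {R : Type*} [CommSemiring R] (a : R) (s : Multiset R) (k : ℕ) :
    (a ::ₘ s).esymm (k + 1) = s.esymm (k + 1) + a * s.esymm k := by
  simp only [esymm, powersetCard_cons, map_add, sum_add, map_map, Function.comp_def, prod_cons,
    sum_map_mul_left]

theorem esymm_cons_cons_le {x y x' y' : ℕ} (hadd : x + y = x' + y') (hmul : x * y ≤ x' * y')
    (t : Multiset ℕ) (m : ℕ) : (x ::ₘ y ::ₘ t).esymm m ≤ (x' ::ₘ y' ::ₘ t).esymm m := by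
  match m with
  | 0 => simp only [esymm_zero, le_refl]
  | 1 =>
    simp only [esymm_cons_succ, esymm_zero]
    omega
  | k + 2 =>
    simp only [esymm_cons_succ]
    nlinarith [Nat.mul_le_mul_right (t.esymm k) hmul]

theorem eq_replicate_add_replicate {s : Multiset ℕ} {a : ℕ} (h : ∀ x ∈ s, x = a + 1 ∨ x = a) :
    s = replicate (s.count (a + 1)) (a + 1) + replicate (s.count a) a := by
  ext x
  rw [count_add, count_replicate, count_replicate]
  by_cases hx : x ∈ s
  · rcases h x hx with rfl | rfl <;> simp
  · rw [count_eq_zero_of_notMem hx]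
    split_ifs <;> subst_vars <;> simp_all

theorem eq_balancedMultiset_of_forall_le_add_one {s : Multiset ℕ}
    (h : ∀ a ∈ s, ∀ b ∈ s, a ≤ b + 1) : s = balancedMultiset (card s) s.sum := by
  rcases empty_or_exists_mem s with rfl | hne
  · rfl
  classical
  set a := Nat.find hne
  have ha : a ∈ s := Nat.find_spec hne
  have hs := eq_replicate_add_replicate (s := s) (a := a) fun x hx => by
    have := Nat.find_min' hne hx
    have := h x hx a ha
    omega
  have hd : 0 < s.count a := count_pos.mpr ha
  conv_rhs => rw [hs]
  simp only [card_add, card_replicate, sum_add, sum_replicate, smul_eq_mul]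
  rw [balancedMultiset_replicate_add_replicate _ _ _ hd, ← hs]

theorem esymm_le_esymm_balancedMultiset (s : Multiset ℕ) (m : ℕ) :
    s.esymm m ≤ (balancedMultiset (card s) s.sum).esymm m := by
  by_cases h : ∃ a ∈ s, ∃ b ∈ s, b + 1 < a
  · obtain ⟨a, ha, b, hb, hab⟩ := h
    obtain ⟨x, rfl⟩ : ∃ x, a = x + 1 := ⟨a - 1, by omega⟩
    obtain ⟨t, rfl⟩ := exists_cons_of_mem ha
    obtain ⟨t, rfl⟩ := exists_cons_of_mem ((mem_cons.mp hb).resolve_left (by omega))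
    calc ((x + 1) ::ₘ b ::ₘ t).esymm m
        ≤ (x ::ₘ (b + 1) ::ₘ t).esymm m := esymm_cons_cons_le (by omega) (by nlinarith) t m
      _ ≤ (balancedMultiset (card (x ::ₘ (b + 1) ::ₘ t)) (x ::ₘ (b + 1) ::ₘ t).sum).esymm m :=
        esymm_le_esymm_balancedMultiset _ m
      _ = _ := by simp only [card_cons, sum_cons]; ring_nf
  · push Not at h
    rw [← eq_balancedMultiset_of_forall_le_add_one fun a ha b hb => by have := h a ha b hb; omega]
termination_by (s.map (· ^ 2)).sum
decreasing_by
  subst_vars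
  simp only [map_cons, sum_cons]
  nlinarith

end Multiset

theorem esymmFun_eq_esymm (n : ℕ) (f : Fin n → ℕ) (m : ℕ) :
    esymmFun n f m = (univ.val.map f).esymm m :=
  (Finset.esymm_map_val f univ m).symm

theorem Fin.sum_univ_ite_val_lt (n k a b : ℕ) (hk : k ≤ n) :
    ∑ i : Fin n, (if (i : ℕ) < k then a else b) = k * a + (n - k) * b := by
  rw [Finset.sum_ite, Finset.sum_const, Finset.sum_const, Fin.card_filter_val_lt,
    Finset.filter_not, card_sdiff_of_subset (filter_subset _ _), Fin.card_filter_val_lt, card_univ,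
    Fintype.card_fin, min_eq_right hk, smul_eq_mul, smul_eq_mul]

theorem stmt4_general (n : ℕ) (lam : Fin n → ℕ)
    (S : ℕ) (hS : S = ∑ i, lam i)
    (lstar lflr : ℕ) (hflr : lflr = S / n) (hceil : lstar = S / n + 1)
    (δ : ℕ) (hδn : δ ≤ n)
    (hδ : S = (n - δ) * lstar + δ * lflr)
    (mu : Fin n → ℕ) (hmu : mu = fun i : Fin n => if ((i : ℕ) < n - δ) then lstar else lflr)
    (m : ℕ) :
    esymmFun n lam m ≤ esymmFun n mu m := by
  have hgap : ∀ a ∈ univ.val.map mu, ∀ b ∈ univ.val.map mu, a ≤ b + 1 := by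
    simp only [Multiset.mem_map, hmu]
    rintro _ ⟨i, -, rfl⟩ _ ⟨j, -, rfl⟩
    split_ifs <;> omega
  have hsum : (univ.val.map mu).sum = S := by
    rw [← Finset.sum_eq_multiset_sum, hmu, Fin.sum_univ_ite_val_lt _ _ _ _ (Nat.sub_le n δ),
      Nat.sub_sub_self hδn, hδ]
  rw [esymmFun_eq_esymm, esymmFun_eq_esymm,
    Multiset.eq_balancedMultiset_of_forall_le_add_one hgap, hsum, Multiset.card_map, card_val,
    card_fin]
  have hlam := Multiset.esymm_le_esymm_balancedMultiset (univ.val.map lam) m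
  rwa [Multiset.card_map, card_val, card_fin, ← Finset.sum_eq_multiset_sum, ← hS] at hlam

/-- Let `λ₁,…,λₙ` be positive integers with sum `S`, suppose the mean
`λ̄ = S/n` is not an integer, let `λ_* = ⌊λ̄⌋`, `λ* = ⌈λ̄⌉ = λ_* + 1`, and let `δ` be the
positive integer with `S = (n-δ)λ* + δλ_*`.  Then for every `m`,
`eₘ(λ₁,…,λₙ) ≤ eₘ(λ*,…,λ*,λ_*,…,λ_*)`, where `λ*` appears `n-δ` times and `λ_*`
appears `δ` times on the right-hand side. -/
theorem stmt4 (n : ℕ) (hn : 0 < n) (lam : Fin n → ℕ) (hpos : ∀ i, 0 < lam i)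
    (S : ℕ) (hS : S = ∑ i, lam i)
    (hnotint : ¬ (n ∣ S))
    (lstar lflr : ℕ) (hflr : lflr = S / n) (hceil : lstar = S / n + 1)
    (δ : ℕ) (hδpos : 0 < δ) (hδn : δ ≤ n)
    (hδ : S = (n - δ) * lstar + δ * lflr)
    (mu : Fin n → ℕ) (hmu : mu = fun i : Fin n => if ((i : ℕ) < n - δ) then lstar else lflr)
    (m : ℕ) :
    esymmFun n lam m ≤ esymmFun n mu m :=
  stmt4_general n lam S hS lstar lflr hflr hceil δ hδn hδ mu hmu m
end

section
/- Let p(λ) = (λ-1)(λ-2)·q(λ) where q is a monic polynomial of degree n = r-2 with positive integer roots summing to 3(r-2) - δ, 0 ≤ δ ≤ r-2, and let -b₁, b₂ be the coefficients of λ^{n-1} and λ^{n-2} in q. Then b₂ ≤ 9·C(r-2-δ,2) + 6δ(r-2-δ) + 4·C(δ,2), with equality if and only if q(λ) = (λ-3)^{r-2-δ}(λ-2)^δ. -/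
open Finset Polynomial

lemma two_choose_two (k : ℕ) : 2 * k.choose 2 = k * (k - 1) := by
  induction k with
  | zero => rfl
  | succ k ih =>
    rw [Nat.choose_succ_succ, Nat.choose_one_right, Nat.mul_add, ih]
    cases k with
    | zero => rfl
    | succ k => simp only [Nat.succ_sub_one]; ring

lemma sq_sum_eq {ι : Type*} [DecidableEq ι] (s : Finset ι) (f : ι → ℕ) :
    (∑ i ∈ s, f i) * (∑ i ∈ s, f i) =
      (∑ i ∈ s, f i * f i) + 2 * ∑ t ∈ s.powersetCard 2, ∏ i ∈ t, f i := by
  induction s using Finset.induction_on with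
  | empty => simp
  | @insert a s ha ih =>
    have hdisj : Disjoint (s.powersetCard 2) ((s.powersetCard 1).image (insert a)) := by
      rw [Finset.disjoint_left]
      intro t ht ht'
      rw [Finset.mem_powersetCard] at ht
      rw [Finset.mem_image] at ht'
      obtain ⟨u, _, rfl⟩ := ht'
      exact ha (ht.1 (Finset.mem_insert_self a u))
    have hsub : ∀ t ∈ s.powersetCard 1, a ∉ t := by
      intro t ht hat
      rw [Finset.mem_powersetCard] at ht
      exact ha (ht.1 hat)
    have himg : ∑ t ∈ (s.powersetCard 1).image (insert a), ∏ i ∈ t, f i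
        = ∑ t ∈ s.powersetCard 1, ∏ i ∈ insert a t, f i := by
      refine Finset.sum_image ?_
      intro t ht u hu h
      have h2 : (insert a t).erase a = (insert a u).erase a := by rw [h]
      rwa [Finset.erase_insert (hsub t ht), Finset.erase_insert (hsub u hu)] at h2
    have hprod : ∀ t ∈ s.powersetCard 1, ∏ i ∈ insert a t, f i = f a * ∏ i ∈ t, f i := by
      intro t ht
      rw [Finset.prod_insert (hsub t ht)]
    have hone : ∑ t ∈ s.powersetCard 1, ∏ i ∈ t, f i = ∑ i ∈ s, f i := by
      rw [Finset.powersetCard_one, Finset.sum_map]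
      simp
    rw [Finset.sum_insert ha, Finset.sum_insert ha, Finset.powersetCard_succ_insert ha,
      Finset.sum_union hdisj, himg, Finset.sum_congr rfl hprod, ← Finset.mul_sum, hone]
    nlinarith [ih]

lemma pt_le (x : ℕ) : 5 * x ≤ x * x + 6 := by
  rcases Nat.lt_or_ge x 3 with h | h
  · interval_cases x <;> omega
  · nlinarith

lemma pt_eq (x : ℕ) : 5 * x = x * x + 6 ↔ x = 2 ∨ x = 3 := by
  constructor
  · intro h
    rcases Nat.lt_or_ge x 4 with h4 | h4
    · interval_cases x <;> omega
    · nlinarith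
  · rintro (rfl | rfl) <;> rfl

lemma arith (m d : ℕ) :
    2 * (9 * m.choose 2 + 6 * d * m + 4 * d.choose 2) + 5 * (3 * m + 2 * d)
      = (3 * m + 2 * d) * (3 * m + 2 * d) + 6 * (m + d) := by
  have e1 : 2 * m.choose 2 + m = m * m := by
    rw [two_choose_two]; cases m with
    | zero => rfl
    | succ k => simp only [Nat.succ_sub_one]; ring
  have e2 : 2 * d.choose 2 + d = d * d := by
    rw [two_choose_two]; cases d with
    | zero => rfl
    | succ k => simp only [Nat.succ_sub_one]; ring
  linarith [e1, e2]

/-- Let `p(λ) = (λ-1)(λ-2)q(λ)` where `q` is a monic polynomial of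
degree `n = r - 2` with positive integer roots `ρ₁,…,ρₙ` summing to `3(r-2) - δ`,
`0 ≤ δ ≤ r - 2`, and let `b₂ = e₂(ρ₁,…,ρₙ)` be the coefficient of `λ^{n-2}` in `q`.
Then `b₂ ≤ 9⬝C(r-2-δ,2) + 6δ(r-2-δ) + 4⬝C(δ,2)`, with equality if and only if
`q(λ) = (λ-3)^{r-2-δ}(λ-2)^δ`. -/
theorem stmt13 (r δ : ℕ) (hr : 2 ≤ r) (hδ : δ ≤ r - 2)
    (ρ : Fin (r - 2) → ℕ) (hpos : ∀ i, 0 < ρ i)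
    (hsum : (∑ i, ρ i) + δ = 3 * (r - 2))
    (q : Polynomial ℤ) (hq : q = ∏ i, (X - C (ρ i : ℤ)))
    (p : Polynomial ℤ) (hp : p = (X - C 1) * (X - C 2) * q)
    (b₂ : ℕ) (hb₂ : b₂ = esymmFun (r - 2) ρ 2) :
    b₂ ≤ 9 * (r - 2 - δ).choose 2 + 6 * δ * (r - 2 - δ) + 4 * δ.choose 2 ∧
    (b₂ = 9 * (r - 2 - δ).choose 2 + 6 * δ * (r - 2 - δ) + 4 * δ.choose 2 ↔
      q = (X - C 3) ^ (r - 2 - δ) * (X - C 2) ^ δ) := by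
  have hid : (∑ i, ρ i) * (∑ i, ρ i) = (∑ i, ρ i * ρ i) + 2 * b₂ := by
    rw [hb₂]; exact sq_sum_eq Finset.univ ρ
  have hQn : (∑ i, ρ i * ρ i) + 6 * (r - 2) = ∑ i, (ρ i * ρ i + 6) := by
    rw [Finset.sum_add_distrib, Finset.sum_const, Finset.card_univ, Fintype.card_fin]
    ring
  have h5S : 5 * (∑ i, ρ i) = ∑ i, 5 * ρ i := Finset.mul_sum _ _ _
  have hle : 5 * (∑ i, ρ i) ≤ (∑ i, ρ i * ρ i) + 6 * (r - 2) := by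
    rw [hQn, h5S]
    exact Finset.sum_le_sum fun i _ => pt_le (ρ i)
  have hSval : (∑ i, ρ i) = 3 * (r - 2 - δ) + 2 * δ := by omega
  have hmδ : (r - 2 - δ) + δ = r - 2 := by omega
  have hTid := arith (r - 2 - δ) δ
  rw [hmδ, ← hSval, hid] at hTid
  have hbound : b₂ ≤ 9 * (r - 2 - δ).choose 2 + 6 * δ * (r - 2 - δ) + 4 * δ.choose 2 := by
    omega
  have heq23 : b₂ = 9 * (r - 2 - δ).choose 2 + 6 * δ * (r - 2 - δ) + 4 * δ.choose 2 ↔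
      ∀ i, ρ i = 2 ∨ ρ i = 3 := by
    have h1 : b₂ = 9 * (r - 2 - δ).choose 2 + 6 * δ * (r - 2 - δ) + 4 * δ.choose 2 ↔
        5 * (∑ i, ρ i) = (∑ i, ρ i * ρ i) + 6 * (r - 2) := by omega
    rw [h1, hQn, h5S,
      Finset.sum_eq_sum_iff_of_le fun i _ => pt_le (ρ i)]
    constructor
    · intro h i; exact (pt_eq (ρ i)).1 (h i (Finset.mem_univ i))
    · intro h i _; exact (pt_eq (ρ i)).2 (h i)
  refine ⟨hbound, heq23.trans ?_⟩
  constructor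
  · -- all roots in {2,3} → q has the given form
    intro h23
    classical
    have hcards : (Finset.univ.filter (fun i : Fin (r - 2) => ρ i = 3)).card
        + (Finset.univ.filter (fun i : Fin (r - 2) => ¬ ρ i = 3)).card = r - 2 := by
      rw [Finset.card_filter_add_card_filter_not, Finset.card_univ, Fintype.card_fin]
    have hsplit : (∑ i, ρ i) = (∑ i ∈ Finset.univ.filter (fun i : Fin (r - 2) => ρ i = 3), ρ i)
        + ∑ i ∈ Finset.univ.filter (fun i : Fin (r - 2) => ¬ ρ i = 3), ρ i :=
      (Finset.sum_filter_add_sum_filter_not _ _ _).symm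
    have hA3 : (∑ i ∈ Finset.univ.filter (fun i : Fin (r - 2) => ρ i = 3), ρ i)
        = 3 * (Finset.univ.filter (fun i : Fin (r - 2) => ρ i = 3)).card := by
      rw [Finset.sum_congr rfl (fun i hi => (Finset.mem_filter.1 hi).2), Finset.sum_const]
      ring
    have hB2' : ∀ i ∈ Finset.univ.filter (fun i : Fin (r - 2) => ¬ ρ i = 3), ρ i = 2 :=
      fun i hi => (h23 i).resolve_right (Finset.mem_filter.1 hi).2
    have hB2 : (∑ i ∈ Finset.univ.filter (fun i : Fin (r - 2) => ¬ ρ i = 3), ρ i)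
        = 2 * (Finset.univ.filter (fun i : Fin (r - 2) => ¬ ρ i = 3)).card := by
      rw [Finset.sum_congr rfl hB2', Finset.sum_const, smul_eq_mul, mul_comm]
    have hcardA : (Finset.univ.filter (fun i : Fin (r - 2) => ρ i = 3)).card = r - 2 - δ := by
      omega
    have hcardB : (Finset.univ.filter (fun i : Fin (r - 2) => ¬ ρ i = 3)).card = δ := by
      omega
    rw [hq, ← Finset.prod_filter_mul_prod_filter_not Finset.univ (fun i => ρ i = 3)]
    have hA' : ∀ i ∈ Finset.univ.filter (fun i : Fin (r - 2) => ρ i = 3),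
        (X - C ((ρ i : ℤ))) = X - C 3 := by
      intro i hi
      rw [(Finset.mem_filter.1 hi).2]; norm_num
    have hB' : ∀ i ∈ Finset.univ.filter (fun i : Fin (r - 2) => ¬ ρ i = 3),
        (X - C ((ρ i : ℤ))) = X - C 2 := by
      intro i hi
      rw [hB2' i hi]; norm_num
    congr 1
    · rw [Finset.prod_congr rfl hA', Finset.prod_const, hcardA]
    · rw [Finset.prod_congr rfl hB', Finset.prod_const, hcardB]
  · -- q of the given form → all roots in {2,3}
    intro hform i
    have heval := congrArg (Polynomial.eval ((ρ i : ℤ))) (hq ▸ hform)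
    rw [Polynomial.eval_prod] at heval
    have hzero : (∏ j, Polynomial.eval ((ρ i : ℤ)) (X - C ((ρ j : ℤ)))) = 0 := by
      apply Finset.prod_eq_zero (Finset.mem_univ i)
      simp
    rw [hzero] at heval
    simp only [Polynomial.eval_mul, Polynomial.eval_pow, Polynomial.eval_sub,
      Polynomial.eval_X, Polynomial.eval_C] at heval
    rcases mul_eq_zero.1 heval.symm with h | h
    · right
      have h3 : ((ρ i : ℤ)) - 3 = 0 := by
        by_contra hne
        exact pow_ne_zero _ hne h
      have h3' : (ρ i : ℤ) = 3 := by linarith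
      exact_mod_cast h3'
    · left
      have h2 : ((ρ i : ℤ)) - 2 = 0 := by
        by_contra hne
        exact pow_ne_zero _ hne h
      have h2' : (ρ i : ℤ) = 2 := by linarith
      exact_mod_cast h2'
end
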